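/- Let y : ℝⁿ → ℝᴷ be any map. Suppose x₁ is classified as label i with confidence gap g(x₁) = y_i(x₁) - max_{k≠i} y_k(x₁) > 0 and x₂ is classified as a different label j with confidence gap g(x₂) = y_j(x₂) - max_{k≠j} y_k(x₂) > 0. Then g(x₁) + g(x₂) ≤ √2 · ‖y(x₁) - y(x₂)‖₂. -/

import Mathlib

namespace EuclideanSpace

variable {ι : Type*} [Fintype ι]

theorem sq_add_sq_le_norm_sq (v : EuclideanSpace ℝ ι) {i j : ι} (hij : i ≠ j) :
    v i ^ 2 + v j ^ 2 ≤ ‖v‖ ^ 2 := by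
  classical
  simp only [EuclideanSpace.norm_sq_eq, Real.norm_eq_abs, sq_abs]
  rw [← Finset.sum_pair (f := fun k => v k ^ 2) hij]
  exact Finset.sum_le_univ_sum_of_nonneg fun k => sq_nonneg _

theorem sub_le_sqrt_two_mul_norm (v : EuclideanSpace ℝ ι) {i j : ι} (hij : i ≠ j) :
    v i - v j ≤ Real.sqrt 2 * ‖v‖ := by
  have hsq : (v i - v j) ^ 2 ≤ 2 * ‖v‖ ^ 2 := by
    nlinarith [sq_add_sq_le_norm_sq v hij, sq_nonneg (v i + v j)]
  calc v i - v j ≤ |v i - v j| := le_abs_self _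
    _ ≤ Real.sqrt (2 * ‖v‖ ^ 2) := Real.abs_le_sqrt hsq
    _ = Real.sqrt 2 * ‖v‖ := by rw [Real.sqrt_mul zero_le_two, Real.sqrt_sq (norm_nonneg v)]

end EuclideanSpace

theorem stmt_4_general (n K : ℕ)
    (y : EuclideanSpace ℝ (Fin n) → EuclideanSpace ℝ (Fin K))
    (x₁ x₂ : EuclideanSpace ℝ (Fin n)) (i j : Fin K) (hij : i ≠ j)
    (g₁ g₂ : ℝ)
    (hg₁ : g₁ = y x₁ i -
      (Finset.univ.erase i).sup'
        ⟨j, Finset.mem_erase.mpr ⟨hij.symm, Finset.mem_univ j⟩⟩ (fun k => y x₁ k))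
    (hg₂ : g₂ = y x₂ j -
      (Finset.univ.erase j).sup'
        ⟨i, Finset.mem_erase.mpr ⟨hij, Finset.mem_univ i⟩⟩ (fun k => y x₂ k)) :
    g₁ + g₂ ≤ Real.sqrt 2 * ‖y x₁ - y x₂‖ := by
  have h₁ : g₁ ≤ y x₁ i - y x₁ j :=
    hg₁ ▸ sub_le_sub_left
      (Finset.le_sup' _ (Finset.mem_erase_of_ne_of_mem hij.symm (Finset.mem_univ j))) _
  have h₂ : g₂ ≤ y x₂ j - y x₂ i :=
    hg₂ ▸ sub_le_sub_left
      (Finset.le_sup' _ (Finset.mem_erase_of_ne_of_mem hij (Finset.mem_univ i))) _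
  calc g₁ + g₂ ≤ (y x₁ - y x₂) i - (y x₁ - y x₂) j := by
        simp only [PiLp.sub_apply]; linarith
    _ ≤ Real.sqrt 2 * ‖y x₁ - y x₂‖ := (y x₁ - y x₂).sub_le_sqrt_two_mul_norm hij

theorem stmt_4 (n K : ℕ)
    (y : EuclideanSpace ℝ (Fin n) → EuclideanSpace ℝ (Fin K))
    (x₁ x₂ : EuclideanSpace ℝ (Fin n)) (i j : Fin K) (hij : i ≠ j)
    (g₁ g₂ : ℝ)
    (hg₁ : g₁ = y x₁ i -
      (Finset.univ.erase i).sup'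
        ⟨j, Finset.mem_erase.mpr ⟨hij.symm, Finset.mem_univ j⟩⟩ (fun k => y x₁ k))
    (hg₂ : g₂ = y x₂ j -
      (Finset.univ.erase j).sup'
        ⟨i, Finset.mem_erase.mpr ⟨hij, Finset.mem_univ i⟩⟩ (fun k => y x₂ k))
    (hg₁pos : 0 < g₁) (hg₂pos : 0 < g₂) :
    g₁ + g₂ ≤ Real.sqrt 2 * ‖y x₁ - y x₂‖ :=
  stmt_4_general n K y x₁ x₂ i j hij g₁ g₂ hg₁ hg₂
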